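/- arXiv:1904.02214 — 3 statements merged into one kernel-verified Lean document; each statement's English description precedes it below -/
import Mathlib

section
/- Let 𝒳 be a finite set, σ : 𝒳 → 𝒳 a bijection, and n ≥ 1. For i ∈ {1,…,n} let ¬ᵢ : 𝒳ⁿ → 𝒳ⁿ be the map applying σ to the i-th coordinate (leaving the others fixed) and ¬ᵢ⁻¹ its inverse. Let p : 𝒳ⁿ → ℝ be a strictly positive probability mass function. Then for every function φ : 𝒳ⁿ → ℂ and every i ∈ {1,…,n}, ∑_{x∈𝒳ⁿ} p(x)·( sᵢ(x)·φ(x) − (φ(x) − φ(¬ᵢ⁻¹ x)) ) = 0, where sᵢ(x) = (p(x) − p(¬ᵢ x))/p(x) is the i-th component of the difference score function of p. -/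
open Finset

/-- Discrete Stein identity for complex-valued functions: for a strictly positive
probability mass function `p` on `X^n`, a cyclic permutation `σ` of the finite set `X`
acting on the `i`-th coordinate via `neg i`, with inverse action `negInv i`,
the expectation under `p` of the discrete Stein operator applied to any `φ : X^n → ℂ`
vanishes. -/
theorem discrete_stein_identity
    {X : Type*} [Fintype X] [DecidableEq X] (σ : Equiv X X)
    (n : ℕ) (hn : 1 ≤ n)
    (p : (Fin n → X) → ℝ)
    (hp_pos : ∀ x, 0 < p x)
    (hp_sum : ∑ x : Fin n → X, p x = 1)
    (φ : (Fin n → X) → ℂ) (i : Fin n) :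
    (∑ x : Fin n → X,
      (p x : ℂ) *
        ( (((p x - p (Function.update x i (σ (x i)))) / p x : ℝ) : ℂ) * φ x
          - (φ x - φ (Function.update x i (σ.symm (x i)))) )) = 0 := by
  have hne : ∀ x : Fin n → X, (p x : ℂ) ≠ 0 := fun x => by
    exact_mod_cast (hp_pos x).ne'
  have step : ∀ x : Fin n → X,
      (p x : ℂ) * ((((p x - p (Function.update x i (σ (x i)))) / p x : ℝ) : ℂ) * φ x
        - (φ x - φ (Function.update x i (σ.symm (x i)))))
      = (((p x : ℂ) - (p (Function.update x i (σ (x i))) : ℂ)) * φ x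
        - (p x : ℂ) * (φ x - φ (Function.update x i (σ.symm (x i))))) := by
    intro x
    have h := hne x
    push_cast
    field_simp
  simp only [step]
  rw [Finset.sum_sub_distrib]
  have key : ∑ x : Fin n → X, ((p x : ℂ) - (p (Function.update x i (σ (x i))) : ℂ)) * φ x
      = ∑ x : Fin n → X, (p x : ℂ) * (φ x - φ (Function.update x i (σ.symm (x i)))) := by
    simp only [sub_mul, mul_sub]
    rw [Finset.sum_sub_distrib, Finset.sum_sub_distrib]
    congr 1
    apply Fintype.sum_bijective (fun x : Fin n → X => Function.update x i (σ (x i)))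
    · constructor
      · intro a b hab
        have := congrArg (fun y : Fin n → X => Function.update y i (σ.symm (y i))) hab
        simpa using this
      · intro y
        exact ⟨Function.update y i (σ.symm (y i)), by simp⟩
    · intro x
      simp
  rw [key, sub_self]
end

section
/- Let Σ and B be n×n complex Hermitian matrices with Σ² = I, and let w ∈ ℂⁿ. Define u(θ) = exp(−i(θ/2)Σ)·w (matrix exponential applied to w) and f(θ) = Re⟨u(θ), B·u(θ)⟩. Then for every θ ∈ ℝ, f is differentiable at θ with f′(θ) = (1/2)·( f(θ + π/2) − f(θ − π/2) ). -/
/-!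
Since `S * S = 1`, the exponential series splits into even and odd parts and
`exp (-i φ S) = cos φ • 1 - i sin φ • S`. Hence `f θ` is a quadratic form in `cos (θ/2)` and
`sin (θ/2)`, i.e. `f θ = p + q cos θ + r sin θ`. For such a first-order trigonometric polynomial,
shifting by `± π/2` turns `(cos, sin)` into `(∓ sin, ± cos)`, so half the difference of the
shifted values is exactly `-q sin θ + r cos θ = f' θ`.
-/

open Matrix Real

theorem NormedSpace.exp_smul_eq_cosh_add_sinh_of_mul_self_eq_one {A : Type*} [Ring A]
    [Algebra ℂ A] [TopologicalSpace A] [IsTopologicalRing A] [ContinuousSMul ℂ A] [T2Space A]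
    {s : A} (hs : s * s = 1) (z : ℂ) :
    NormedSpace.exp (z • s) = Complex.cosh z • (1 : A) + Complex.sinh z • s := by
  rw [NormedSpace.exp_eq_tsum ℂ]
  refine (HasSum.even_add_odd ?_ ?_).tsum_eq
  · have h_even (k : ℕ) : ((2 * k).factorial⁻¹ : ℂ) • (z • s) ^ (2 * k)
        = (z ^ (2 * k) / (2 * k).factorial) • (1 : A) := by
      rw [smul_pow, pow_mul s, sq, hs, one_pow, smul_smul, div_eq_inv_mul]
    simpa only [h_even] using (Complex.hasSum_cosh z).smul_const (1 : A)
  · have h_odd (k : ℕ) : ((2 * k + 1).factorial⁻¹ : ℂ) • (z • s) ^ (2 * k + 1)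
        = (z ^ (2 * k + 1) / (2 * k + 1).factorial) • s := by
      rw [smul_pow, pow_succ s, pow_mul s, sq, hs, one_pow, one_mul, smul_smul, div_eq_inv_mul]
    simpa only [h_odd] using (Complex.hasSum_sinh z).smul_const s

theorem Matrix.exp_neg_I_mul_smul_mulVec_of_mul_self_eq_one {n : ℕ}
    {S : Matrix (Fin n) (Fin n) ℂ} (hS2 : S * S = 1) (φ : ℝ) (w : Fin n → ℂ) :
    (NormedSpace.exp ((-Complex.I * φ) • S)).mulVec w
      = (cos φ : ℂ) • w + (-Complex.I * sin φ) • S *ᵥ w := by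
  have h_arg : -Complex.I * φ = -(φ * Complex.I) := by ring
  rw [NormedSpace.exp_smul_eq_cosh_add_sinh_of_mul_self_eq_one hS2, h_arg, Complex.cosh_neg,
    Complex.sinh_neg, Complex.cosh_mul_I, Complex.sinh_mul_I, add_mulVec, smul_mulVec,
    smul_mulVec, one_mulVec, ← Complex.ofReal_cos, ← Complex.ofReal_sin]
  congr 2
  ring

theorem re_star_dotProduct_mulVec_cos_smul_add {n : ℕ} (B : Matrix (Fin n) (Fin n) ℂ)
    (x y : Fin n → ℂ) (φ : ℝ) :
    (star ((cos φ : ℂ) • x + (-Complex.I * sin φ) • y)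
        ⬝ᵥ B *ᵥ ((cos φ : ℂ) • x + (-Complex.I * sin φ) • y)).re
      = (star x ⬝ᵥ B *ᵥ x).re * cos φ ^ 2 + (star y ⬝ᵥ B *ᵥ y).re * sin φ ^ 2
      + ((star x ⬝ᵥ B *ᵥ y).im - (star y ⬝ᵥ B *ᵥ x).im) * (cos φ * sin φ) := by
  simp only [star_add, star_smul, mulVec_add, mulVec_smul, add_dotProduct, dotProduct_add,
    smul_dotProduct, dotProduct_smul, smul_eq_mul, RCLike.star_def, map_mul, map_neg,
    Complex.conj_I, Complex.conj_ofReal, Complex.add_re, Complex.add_im, Complex.mul_re,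
    Complex.mul_im, Complex.neg_re, Complex.neg_im, Complex.I_re, Complex.I_im, Complex.ofReal_re,
    Complex.ofReal_im]
  ring

theorem mul_cos_sq_half_add_mul_sin_sq_half (a d e θ : ℝ) :
    a * cos (θ / 2) ^ 2 + d * sin (θ / 2) ^ 2 + e * (cos (θ / 2) * sin (θ / 2))
      = (a + d) / 2 + (a - d) / 2 * cos θ + e / 2 * sin θ := by
  have h_double : θ = 2 * (θ / 2) := by ring
  conv_rhs => rw [h_double, cos_two_mul', sin_two_mul]
  linear_combination (a + d) / 2 * sin_sq_add_cos_sq (θ / 2)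

theorem hasDerivAt_half_sub_shift_of_eq_trig {f : ℝ → ℝ} {p q r : ℝ}
    (hf : ∀ t, f t = p + q * cos t + r * sin t) (θ : ℝ) :
    HasDerivAt f ((1 / 2) * (f (θ + π / 2) - f (θ - π / 2))) θ := by
  have h_deriv : HasDerivAt (fun t ↦ p + q * cos t + r * sin t) (q * -sin θ + r * cos θ) θ :=
    (((hasDerivAt_cos θ).const_mul q).const_add p).add ((hasDerivAt_sin θ).const_mul r)
  rw [funext hf]
  convert h_deriv using 1
  simp only [cos_add_pi_div_two, sin_add_pi_div_two, cos_sub_pi_div_two, sin_sub_pi_div_two]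
  ring

theorem parameter_shift_rule_general
    {n : ℕ} (S B : Matrix (Fin n) (Fin n) ℂ)
    (hS2 : S * S = 1)
    (w : Fin n → ℂ)
    (u : ℝ → Fin n → ℂ)
    (hu : ∀ θ : ℝ, u θ = (NormedSpace.exp ((-(Complex.I) * (θ / 2 : ℝ)) • S)).mulVec w)
    (f : ℝ → ℝ)
    (hf : ∀ θ : ℝ, f θ = (star (u θ) ⬝ᵥ B.mulVec (u θ)).re) :
    ∀ θ : ℝ, HasDerivAt f ((1 / 2) * (f (θ + π / 2) - f (θ - π / 2))) θ :=
  hasDerivAt_half_sub_shift_of_eq_trig fun t ↦ by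
    rw [hf, hu, exp_neg_I_mul_smul_mulVec_of_mul_self_eq_one hS2,
      re_star_dotProduct_mulVec_cos_smul_add, mul_cos_sq_half_add_mul_sin_sq_half]

/-- Parameter-shift rule: for a gate `U(θ) = exp(-i (θ/2) S)` generated by a Hermitian
involution `S` (e.g. a tensor product of Pauli operators), applied to a state `w`, with a
Hermitian observable `B`, the expectation value `f θ = Re ⟨u θ, B (u θ)⟩` is differentiable
with derivative `(f (θ + π/2) - f (θ - π/2)) / 2`. -/
theorem parameter_shift_rule
    {n : ℕ} (S B : Matrix (Fin n) (Fin n) ℂ)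
    (hS : S.IsHermitian) (hS2 : S * S = 1)
    (hB : B.IsHermitian) (w : Fin n → ℂ)
    (u : ℝ → Fin n → ℂ)
    (hu : ∀ θ : ℝ, u θ = (NormedSpace.exp ((-(Complex.I) * (θ / 2 : ℝ)) • S)).mulVec w)
    (f : ℝ → ℝ)
    (hf : ∀ θ : ℝ, f θ = (star (u θ) ⬝ᵥ B.mulVec (u θ)).re) :
    ∀ θ : ℝ, HasDerivAt f ((1 / 2) * (f (θ + π / 2) - f (θ - π / 2))) θ :=
  parameter_shift_rule_general S B hS2 w u hu f hf
end

section
/- Fix n ≥ 1, real coupling parameters J : {1,…,n}² → ℝ and biases b : {1,…,n} → ℝ. For x ∈ {0,1}ⁿ write s(x) ∈ {−1,1}ⁿ for the vector with s(x)_i = (−1)^{x_i}, and define the energy E(x) = ∑_{i<j} J_{ij} s(x)_i s(x)_j + ∑_{k=1}^{n} b_k s(x)_k. Let U_z be the 2ⁿ×2ⁿ diagonal complex matrix indexed by {0,1}ⁿ with diagonal entries (U_z)_{x,x} = exp(i·E(x)), and let H_n be the 2ⁿ×2ⁿ matrix with entries (H_n)_{x,y} = 2^{−n/2}·(−1)^{∑_i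 x_i y_i}. Then the amplitude (H_n · U_z · H_n)_{0ⁿ,0ⁿ} equals 2^{−n}·𝒵, where 𝒵 = ∑_{s∈{−1,1}ⁿ} exp( i·( ∑_{i<j} J_{ij} s_i s_j + ∑_{k=1}^{n} b_k s_k ) ) is the Ising partition function with imaginary couplings. -/
open Finset Matrix Complex

/-- The `(0ⁿ, 0ⁿ)` amplitude of an IQP circuit `Hⁿ · U_z · Hⁿ` equals `2^{-n}` times the
Ising partition function with imaginary couplings.  Bit strings are indexed by
`Fin n → Bool`; for a bit string `x`, `s x i = (-1)^{x_i}` is its `±1` encoding. -/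
theorem iqp_amplitude_eq_ising_partition_function
    (n : ℕ) (hn : 1 ≤ n)
    (J : Fin n → Fin n → ℝ) (b : Fin n → ℝ)
    (s : (Fin n → Bool) → Fin n → ℝ)
    (hs : ∀ x i, s x i = if x i then -1 else 1)
    (E : (Fin n → Bool) → ℝ)
    (hE : ∀ x, E x = (∑ i : Fin n, ∑ j ∈ Finset.Ioi i, J i j * s x i * s x j)
                      + ∑ k : Fin n, b k * s x k)
    (Uz Hn : Matrix (Fin n → Bool) (Fin n → Bool) ℂ)
    (hUz : Uz = Matrix.diagonal fun x => Complex.exp (Complex.I * (E x : ℂ)))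
    (hHn : ∀ x y, Hn x y =
      (1 / (Real.sqrt 2 : ℂ)) ^ (n : ℕ) * (-1 : ℂ) ^ (∑ i : Fin n,
        (if x i then 1 else 0) * (if y i then (1 : ℕ) else 0))) :
    (Hn * Uz * Hn) (fun _ => false) (fun _ => false)
      = ((2 : ℂ) ^ (n : ℕ))⁻¹ *
        ∑ ε : Fin n → Bool,
          Complex.exp (Complex.I *
            (((∑ i : Fin n, ∑ j ∈ Finset.Ioi i,
                J i j * (if ε i then -1 else 1) * (if ε j then -1 else 1))
              + ∑ k : Fin n, b k * (if ε k then -1 else 1) : ℝ) : ℂ)) := by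
  have hH0 : ∀ x, Hn (fun _ => false) x = (1 / (Real.sqrt 2 : ℂ)) ^ n := by
    intro x; rw [hHn]; simp
  have hH0' : ∀ x, Hn x (fun _ => false) = (1 / (Real.sqrt 2 : ℂ)) ^ n := by
    intro x; rw [hHn]; simp
  have hsq : (1 / (Real.sqrt 2 : ℂ)) ^ n * (1 / (Real.sqrt 2 : ℂ)) ^ n
      = ((2 : ℂ) ^ n)⁻¹ := by
    rw [← mul_pow, ← inv_pow]
    congr 1
    rw [div_mul_div_comm, one_mul, ← Complex.ofReal_mul,
      Real.mul_self_sqrt (by norm_num)]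
    norm_num
  simp only [Matrix.mul_apply, hUz, Matrix.diagonal_apply, hH0, hH0', mul_ite,
    mul_zero, Finset.sum_ite_eq', Finset.mem_univ, if_true]
  rw [Finset.mul_sum]
  refine Finset.sum_congr rfl fun x _ => ?_
  rw [hE]
  simp only [hs, mul_ite, mul_one, mul_neg]
  rw [mul_comm, ← mul_assoc, hsq]
end
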